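/- Define, for each integer k ≥ 1, B(k) = max( ∫₁^∞ (W_k(x) − 1)·φ(x; 1, 1/(2k)) dx , ∫_{−∞}^1 (1 − W_k(x))·φ(x; 1, 1/(2k)) dx ), where W_k(x) = exp(2k·[log x − (x − 1) + (1/2)·(x − 1)²]) for x > 0 and W_k(x) = 0 for x ≤ 0, and φ(x; 1, 1/(2k)) is the normal density with mean 1 and variance 1/(2k). Then B(k) → 0 as k → ∞. (Consequently, the total variation distance between the density proportional to 1{x>0}·x^(2k)·exp(−(x−μ)²/(2s²)) and its Laplace Gaussian approximation tends to zero, uniformly in μ and s, as the count k increases.) -/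

import Mathlib

open MeasureTheory Real Filter

/-- The density of the normal distribution with mean `μ` and variance `s2`:
`φ(x; μ, s²) = (2πs²)^(−1/2)·exp(−(x−μ)²/(2s²))`. -/
noncomputable def normalPDF (μ s2 x : ℝ) : ℝ :=
  (2 * Real.pi * s2) ^ (-(1:ℝ)/2) * Real.exp (-(x - μ) ^ 2 / (2 * s2))

/-- `W_k(x) = exp(2k·[log x − (x − 1) + (1/2)·(x − 1)²])` for `x > 0` and `0` for `x ≤ 0`. -/
noncomputable def Wfun (k : ℕ) (x : ℝ) : ℝ :=
  if 0 < x then Real.exp (2 * k * (Real.log x - (x - 1) + (1/2) * (x - 1) ^ 2)) else 0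

/-!
Substituting `x = 1 + σ t` with `σ = (2k)^(-1/2)` turns `φ(·; 1, σ²)` into the standard normal
density and `W_k(1 + h)` into `exp (2k · R h)` with `R h = log (1 + h) - h + h² / 2 = O(h³)`; since
`2kσ² = 1`, the exponent is `O(σ t³)`, so the integrands tend to `0` pointwise. They are dominated:
for `h ≤ 0` the logarithmic series gives `R h ≤ 0`, so `0 ≤ W_k ≤ 1`, and for `h ≥ 0` the bound
`log y ≤ sinh (log y) = (y - y⁻¹) / 2` gives `W_k(1 + σ t) · exp (-t² / 2) ≤ exp ((1 - t) / 2)`.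
Dominated convergence concludes.
-/

open ProbabilityTheory Set
open scoped NNReal Topology

lemma log_one_add_le_sub_sq_div {h : ℝ} (hh : 0 ≤ h) :
    log (1 + h) ≤ h - h ^ 2 / (2 * (1 + h)) := by
  have hpos : 0 < 1 + h := by linarith
  calc log (1 + h) ≤ sinh (log (1 + h)) := self_le_sinh_iff.mpr (log_nonneg (by linarith))
    _ = h - h ^ 2 / (2 * (1 + h)) := by rw [sinh_log hpos]; field_simp; ring

lemma log_one_add_le_sub_sq_half {h : ℝ} (h₁ : -1 < h) (h₀ : h ≤ 0) :
    log (1 + h) ≤ h - h ^ 2 / 2 := by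
  have hx : |-h| < 1 := by rw [abs_lt]; constructor <;> linarith
  have hsum := hasSum_pow_div_log_of_abs_lt_one hx
  have := sum_le_hasSum (Finset.range 2) (fun n _ => by
    have : 0 ≤ (-h) ^ (n + 1) := pow_nonneg (by linarith) _
    positivity) hsum
  norm_num [Finset.sum_range_succ] at this
  linarith

lemma abs_log_one_add_sub_add_sq_le {h : ℝ} (hh : |h| ≤ 1 / 2) :
    |log (1 + h) - h + h ^ 2 / 2| ≤ 2 * |h| ^ 3 := by
  have hx : |-h| < 1 := by rw [abs_neg]; linarith
  have key := abs_log_sub_add_sum_range_le hx 2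
  norm_num [Finset.sum_range_succ] at key
  calc |log (1 + h) - h + h ^ 2 / 2| = |-h + h ^ 2 / 2 + log (1 + h)| := by ring_nf
    _ ≤ |h| ^ 3 / (1 - |h|) := key
    _ ≤ |h| ^ 3 / (1 / 2) := by gcongr; linarith
    _ = 2 * |h| ^ 3 := by ring

lemma normalPDF_eq_gaussianPDFReal (μ : ℝ) (v : ℝ≥0) (x : ℝ) :
    normalPDF μ v x = gaussianPDFReal μ v x := by
  rw [normalPDF, gaussianPDFReal, neg_div, rpow_neg (by positivity), sqrt_eq_rpow, one_div]

lemma mul_normalPDF_add_mul {c : ℝ} (hc : 0 < c) (μ t : ℝ) :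
    c * normalPDF μ (c ^ 2) (μ + c * t) = gaussianPDFReal 0 1 t := by
  rw [← Real.coe_toNNReal _ (sq_nonneg c), normalPDF_eq_gaussianPDFReal,
    add_comm, gaussianPDFReal_add, gaussianPDFReal_mul hc.ne', ← mul_assoc, sub_self,
    mul_zero, abs_of_pos (inv_pos.mpr hc), mul_inv_cancel₀ hc.ne', one_mul]
  congr
  ext
  simp [sq_nonneg, hc.ne']

lemma setIntegral_image_add_mul {s : Set ℝ} (hs : MeasurableSet s) (a : ℝ) {c : ℝ} (hc : 0 < c)
    (F : ℝ → ℝ) : ∫ x in (fun t => a + c * t) '' s, F x = c * ∫ t in s, F (a + c * t) := by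
  have hderiv : ∀ t ∈ s, HasDerivWithinAt (fun t => a + c * t) c s t := fun t _ => by
    simpa using ((hasDerivAt_id t).const_mul c).const_add a |>.hasDerivWithinAt
  have hinj : InjOn (fun t => a + c * t) s := fun x _ y _ hxy => by
    simpa [hc.ne'] using hxy
  rw [integral_image_eq_integral_abs_deriv_smul hs hderiv hinj, abs_of_pos hc, ← integral_const_mul]
  rfl

lemma image_add_mul_Ioi_zero (a : ℝ) {c : ℝ} (hc : 0 < c) :
    (fun t => a + c * t) '' Ioi 0 = Ioi a := by
  rw [← image_image (a + ·) (c * ·), image_mul_left_Ioi hc, image_const_add_Ioi, mul_zero,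
    add_zero]

lemma image_add_mul_Iic_zero (a : ℝ) {c : ℝ} (hc : 0 < c) :
    (fun t => a + c * t) '' Iic 0 = Iic a := by
  rw [← image_image (a + ·) (c * ·), image_mul_left_Iic hc, image_const_add_Iic, mul_zero,
    add_zero]

lemma setIntegral_image_mul_normalPDF {s : Set ℝ} (hs : MeasurableSet s) (μ : ℝ) {c : ℝ}
    (hc : 0 < c) (F : ℝ → ℝ) :
    ∫ x in (fun t => μ + c * t) '' s, F x * normalPDF μ (c ^ 2) x
      = ∫ t in s, F (μ + c * t) * gaussianPDFReal 0 1 t := by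
  rw [setIntegral_image_add_mul hs μ hc, ← integral_const_mul]
  congr 1 with t
  rw [← mul_normalPDF_add_mul hc μ t]
  ring

lemma Wfun_one_add (k : ℕ) {h : ℝ} (hh : 0 < 1 + h) :
    Wfun k (1 + h) = exp (2 * k * (log (1 + h) - h + h ^ 2 / 2)) := by
  rw [Wfun, if_pos hh]
  ring_nf

lemma Wfun_nonneg (k : ℕ) (x : ℝ) : 0 ≤ Wfun k x := by
  unfold Wfun
  split_ifs <;> positivity

lemma measurable_Wfun (k : ℕ) : Measurable (Wfun k) :=
  Measurable.ite measurableSet_Ioi (by fun_prop) measurable_const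

lemma Wfun_one_add_le_one (k : ℕ) {h : ℝ} (hh : h ≤ 0) : Wfun k (1 + h) ≤ 1 := by
  rcases lt_or_ge (-1) h with h₁ | h₁
  · rw [Wfun_one_add k (by linarith), exp_le_one_iff]
    have hlog := log_one_add_le_sub_sq_half h₁ hh
    have hrem : log (1 + h) - h + h ^ 2 / 2 ≤ 0 := by linarith
    exact mul_nonpos_of_nonneg_of_nonpos (by positivity) hrem
  · rw [Wfun, if_neg (by linarith)]
    exact zero_le_one

lemma Wfun_one_add_mul_exp_le (k : ℕ) {h : ℝ} (hh : 0 ≤ h) :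
    Wfun k (1 + h) * exp (-(k * h ^ 2)) ≤ exp (-(k * h ^ 2 / (1 + h))) := by
  have hpos : 0 < 1 + h := by linarith
  rw [Wfun_one_add k hpos, ← exp_add, exp_le_exp]
  have hlog := log_one_add_le_sub_sq_div hh
  have hk : (0 : ℝ) ≤ k := k.cast_nonneg
  calc 2 * k * (log (1 + h) - h + h ^ 2 / 2) + -(k * h ^ 2)
      = 2 * k * (log (1 + h) - h) := by ring
    _ ≤ 2 * k * (-(h ^ 2 / (2 * (1 + h)))) := by gcongr; linarith
    _ = -(k * h ^ 2 / (1 + h)) := by field_simp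

noncomputable def laplaceStd (k : ℕ) : ℝ := (√(2 * k))⁻¹

lemma laplaceStd_sq (k : ℕ) : laplaceStd k ^ 2 = 1 / (2 * k) := by
  rw [laplaceStd, inv_pow, sq_sqrt (by positivity), one_div]

lemma laplaceStd_nonneg (k : ℕ) : 0 ≤ laplaceStd k := by
  unfold laplaceStd
  positivity

lemma laplaceStd_pos {k : ℕ} (hk : k ≠ 0) : 0 < laplaceStd k := by
  unfold laplaceStd
  have : (0 : ℝ) < k := by exact_mod_cast Nat.pos_of_ne_zero hk
  positivity

lemma laplaceStd_le_one {k : ℕ} (hk : k ≠ 0) : laplaceStd k ≤ 1 := by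
  have : (1 : ℝ) ≤ k := by exact_mod_cast Nat.one_le_iff_ne_zero.mpr hk
  rw [laplaceStd, inv_le_one₀ (by positivity), one_le_sqrt]
  linarith

lemma tendsto_laplaceStd_atTop : Tendsto laplaceStd atTop (𝓝 0) := by
  have h2k : Tendsto (fun k : ℕ => √(2 * k)) atTop atTop :=
    tendsto_sqrt_atTop.comp (tendsto_natCast_atTop_atTop.const_mul_atTop two_pos)
  exact h2k.inv_tendsto_atTop

lemma natCast_mul_laplaceStd_mul_sq {k : ℕ} (hk : k ≠ 0) (t : ℝ) :
    k * (laplaceStd k * t) ^ 2 = t ^ 2 / 2 := by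
  rw [mul_pow, laplaceStd_sq]
  field_simp

lemma Wfun_one_add_laplaceStd_mul_le {k : ℕ} (hk : k ≠ 0) {t : ℝ} (ht : 0 ≤ t) :
    Wfun k (1 + laplaceStd k * t) * exp (-(t ^ 2 / 2)) ≤ exp ((1 - t) / 2) := by
  have hh : 0 ≤ laplaceStd k * t := mul_nonneg (laplaceStd_pos hk).le ht
  have hht : laplaceStd k * t ≤ t := mul_le_of_le_one_left ht (laplaceStd_le_one hk)
  have hquad : (t - 1) / 2 ≤ t ^ 2 / 2 / (1 + t) := by
    rw [le_div_iff₀ (by linarith)]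
    nlinarith
  have hshrink : t ^ 2 / 2 / (1 + t) ≤ t ^ 2 / 2 / (1 + laplaceStd k * t) := by gcongr
  calc Wfun k (1 + laplaceStd k * t) * exp (-(t ^ 2 / 2))
        ≤ exp (-(t ^ 2 / 2 / (1 + laplaceStd k * t))) := by
        simpa only [natCast_mul_laplaceStd_mul_sq hk] using Wfun_one_add_mul_exp_le k hh
    _ ≤ exp ((1 - t) / 2) := exp_le_exp.mpr (by linarith)

lemma tendsto_Wfun_one_add_laplaceStd_mul (t : ℝ) :
    Tendsto (fun k => Wfun k (1 + laplaceStd k * t)) atTop (𝓝 1) := by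
  have hσ := tendsto_laplaceStd_atTop
  have hsmall : ∀ᶠ k in atTop, |laplaceStd k * t| ≤ 1 / 2 := by
    have : Tendsto (fun k => |laplaceStd k * t|) atTop (𝓝 0) := by
      simpa using (hσ.mul_const t).abs
    exact this.eventually (ge_mem_nhds (by norm_num))
  set E : ℕ → ℝ := fun k =>
    2 * k * (log (1 + laplaceStd k * t) - laplaceStd k * t + (laplaceStd k * t) ^ 2 / 2)
  have hE_le : ∀ᶠ k in atTop, ‖E k‖ ≤ 2 * laplaceStd k * |t| ^ 3 := by
    filter_upwards [hsmall, eventually_ne_atTop 0] with k hk hk0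
    have hrem := abs_log_one_add_sub_add_sq_le hk
    have hσ0 := laplaceStd_pos hk0
    calc ‖E k‖ = 2 * k * |log (1 + laplaceStd k * t) - laplaceStd k * t
          + (laplaceStd k * t) ^ 2 / 2| := by
          rw [Real.norm_eq_abs, abs_mul, abs_of_nonneg (by positivity)]
      _ ≤ 2 * k * (2 * |laplaceStd k * t| ^ 3) := by gcongr
      _ = 2 * laplaceStd k * |t| ^ 3 * (2 * k * laplaceStd k ^ 2) := by
          rw [abs_mul, abs_of_pos hσ0]; ring
      _ = 2 * laplaceStd k * |t| ^ 3 := by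
          rw [laplaceStd_sq]; field_simp
  have hE : Tendsto E atTop (𝓝 0) :=
    squeeze_zero_norm' hE_le (by simpa using (hσ.const_mul 2).mul_const (|t| ^ 3))
  have hW : ∀ᶠ k in atTop, exp (E k) = Wfun k (1 + laplaceStd k * t) := by
    filter_upwards [hsmall] with k hk
    rw [Wfun_one_add k (by linarith [neg_abs_le (laplaceStd k * t)])]
  simpa using (continuous_exp.tendsto 0 |>.comp hE).congr' hW

lemma gaussianPDFReal_zero_one (t : ℝ) :
    gaussianPDFReal 0 1 t = (√(2 * π))⁻¹ * exp (-(t ^ 2 / 2)) := by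
  simp [gaussianPDFReal, neg_div]

lemma tendsto_setIntegral_Ioi_Wfun_sub_one :
    Tendsto (fun k => ∫ t in Ioi 0, (Wfun k (1 + laplaceStd k * t) - 1) * gaussianPDFReal 0 1 t)
      atTop (𝓝 0) := by
  let bound : ℝ → ℝ := fun t => (√(2 * π))⁻¹ * exp ((1 - t) / 2) + gaussianPDFReal 0 1 t
  have hbound : IntegrableOn bound (Ioi 0) := by
    refine Integrable.add ?_ (integrable_gaussianPDFReal 0 1).integrableOn
    have hexp := (exp_neg_integrableOn_Ioi 0 (b := 1 / 2) (by norm_num)).const_mul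
      ((√(2 * π))⁻¹ * exp (1 / 2))
    refine IntegrableOn.congr_fun hexp (fun t _ => ?_) measurableSet_Ioi
    rw [mul_assoc, ← exp_add]
    ring_nf
  have hle : ∀ᶠ k in atTop, ∀ᵐ t ∂volume.restrict (Ioi 0),
      ‖(Wfun k (1 + laplaceStd k * t) - 1) * gaussianPDFReal 0 1 t‖ ≤ bound t := by
    filter_upwards [eventually_ne_atTop 0] with k hk
    refine (ae_restrict_iff' measurableSet_Ioi).mpr (ae_of_all _ fun t ht => ?_)
    have hW := Wfun_nonneg k (1 + laplaceStd k * t)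
    have hφ := gaussianPDFReal_nonneg 0 1 t
    have hmain := Wfun_one_add_laplaceStd_mul_le hk (le_of_lt ht)
    rw [norm_mul, Real.norm_of_nonneg hφ]
    calc |Wfun k (1 + laplaceStd k * t) - 1| * gaussianPDFReal 0 1 t
        ≤ (Wfun k (1 + laplaceStd k * t) + 1) * gaussianPDFReal 0 1 t := by
          gcongr; exact abs_sub_le_iff.mpr ⟨by linarith, by linarith⟩
      _ = (√(2 * π))⁻¹ * (Wfun k (1 + laplaceStd k * t) * exp (-(t ^ 2 / 2)))
          + gaussianPDFReal 0 1 t := by rw [gaussianPDFReal_zero_one]; ring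
      _ ≤ (√(2 * π))⁻¹ * exp ((1 - t) / 2) + gaussianPDFReal 0 1 t := by gcongr
  have hmeas : ∀ k, AEStronglyMeasurable
      (fun t => (Wfun k (1 + laplaceStd k * t) - 1) * gaussianPDFReal 0 1 t)
      (volume.restrict (Ioi 0)) := fun k =>
    ((((measurable_Wfun k).comp (by fun_prop)).sub_const 1).mul
      (measurable_gaussianPDFReal 0 1)).aestronglyMeasurable
  have hdom := tendsto_integral_filter_of_dominated_convergence bound
    (Eventually.of_forall hmeas) hle hbound
    (ae_of_all _ fun t => by
      simpa using ((tendsto_Wfun_one_add_laplaceStd_mul t).sub_const 1).mul_const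
        (gaussianPDFReal 0 1 t))
  rwa [integral_zero] at hdom

lemma tendsto_setIntegral_Iic_one_sub_Wfun :
    Tendsto (fun k => ∫ t in Iic 0, (1 - Wfun k (1 + laplaceStd k * t)) * gaussianPDFReal 0 1 t)
      atTop (𝓝 0) := by
  have hle : ∀ k, ∀ᵐ t ∂volume.restrict (Iic 0),
      ‖(1 - Wfun k (1 + laplaceStd k * t)) * gaussianPDFReal 0 1 t‖ ≤ gaussianPDFReal 0 1 t := by
    refine fun k => (ae_restrict_iff' measurableSet_Iic).mpr (ae_of_all _ fun t ht => ?_)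
    have hW := Wfun_nonneg k (1 + laplaceStd k * t)
    have hW1 := Wfun_one_add_le_one k (mul_nonpos_of_nonneg_of_nonpos (laplaceStd_nonneg k) ht)
    rw [norm_mul, Real.norm_of_nonneg (gaussianPDFReal_nonneg 0 1 t)]
    exact mul_le_of_le_one_left (gaussianPDFReal_nonneg 0 1 t)
      (abs_sub_le_iff.mpr ⟨by linarith, by linarith⟩)
  have hmeas : ∀ k, AEStronglyMeasurable
      (fun t => (1 - Wfun k (1 + laplaceStd k * t)) * gaussianPDFReal 0 1 t)
      (volume.restrict (Iic 0)) := fun k =>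
    ((((measurable_Wfun k).comp (by fun_prop)).const_sub 1).mul
      (measurable_gaussianPDFReal 0 1)).aestronglyMeasurable
  have hdom := tendsto_integral_filter_of_dominated_convergence _
    (Eventually.of_forall hmeas) (Eventually.of_forall hle)
    (integrable_gaussianPDFReal 0 1).integrableOn
    (ae_of_all _ fun t => by
      simpa using ((tendsto_Wfun_one_add_laplaceStd_mul t).const_sub 1).mul_const
        (gaussianPDFReal 0 1 t))
  rwa [integral_zero] at hdom

/-- The total variation bound
`B(k) = max(∫₁^∞ (W_k−1)·φ(·;1,1/(2k)), ∫_{−∞}^1 (1−W_k)·φ(·;1,1/(2k)))`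
tends to `0` as `k → ∞`. -/
theorem stmt15 :
    Tendsto
      (fun k : ℕ =>
        max (∫ x in Set.Ioi (1:ℝ), (Wfun k x - 1) * normalPDF 1 (1 / (2 * k)) x)
            (∫ x in Set.Iic (1:ℝ), (1 - Wfun k x) * normalPDF 1 (1 / (2 * k)) x))
      atTop (nhds 0) := by
  have hlim := tendsto_setIntegral_Ioi_Wfun_sub_one.max tendsto_setIntegral_Iic_one_sub_Wfun
  rw [max_self] at hlim
  refine hlim.congr' ?_
  filter_upwards [eventually_ne_atTop 0] with k hk
  have hσ := laplaceStd_pos hk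
  rw [← laplaceStd_sq, ← image_add_mul_Ioi_zero 1 hσ, ← image_add_mul_Iic_zero 1 hσ,
    setIntegral_image_mul_normalPDF measurableSet_Ioi 1 hσ,
    setIntegral_image_mul_normalPDF measurableSet_Iic 1 hσ]
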